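/- arXiv:2104.07619 — 8 statements merged into one kernel-verified Lean document; each statement's English description precedes it below -/
import Mathlib

section
/- Let J, R be n×n complex matrices with J skew-Hermitian and R Hermitian positive semi-definite. Then the matrix J - R has an eigenvalue on the imaginary axis if and only if there exists an eigenvector v of J with R v = 0. -/
open Matrix
open scoped ComplexOrder

/-!
The real part of the Rayleigh quotient `v⋆ A v / v⋆ v` of an eigenvector is the real part of its
eigenvalue. For skew-Hermitian `J` the form `v⋆ J v` is purely imaginary, so an eigenvector of
`J - R` for an imaginary eigenvalue has `Re (v⋆ R v) = 0`; since `R ⪰ 0` this forces `R v = 0`,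
and then `v` is an eigenvector of `J` for the same eigenvalue. Conversely, an eigenvector of `J`
killed by `R` is an eigenvector of `J - R`, and eigenvalues of `J` are imaginary.
-/

namespace Matrix

variable {ι 𝕜 : Type*} [Fintype ι] [RCLike 𝕜]

lemma re_star_dotProduct_mulVec_eq_zero_of_conjTranspose_eq_neg {J : Matrix ι ι 𝕜}
    (hJ : Jᴴ = -J) (v : ι → 𝕜) : RCLike.re (star v ⬝ᵥ J *ᵥ v) = 0 := by
  have hconj : star (star v ⬝ᵥ J *ᵥ v) = star v ⬝ᵥ Jᴴ *ᵥ v := by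
    rw [star_dotProduct, star_star, star_mulVec, dotProduct_mulVec]
  rw [hJ, neg_mulVec, dotProduct_neg] at hconj
  have hre := congrArg RCLike.re hconj
  rw [RCLike.star_def, RCLike.conj_re, map_neg] at hre
  linarith

lemma re_eq_zero_iff_re_star_dotProduct_mulVec_eq_zero {A : Matrix ι ι 𝕜} {μ : 𝕜}
    {v : ι → 𝕜} (hv : v ≠ 0) (hAv : A *ᵥ v = μ • v) :
    RCLike.re μ = 0 ↔ RCLike.re (star v ⬝ᵥ A *ᵥ v) = 0 := by
  obtain ⟨r, hr, hrv⟩ := RCLike.pos_iff_exists_ofReal.mp (dotProduct_star_self_pos_iff.mpr hv)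
  rw [hAv, dotProduct_smul, smul_eq_mul, ← hrv, RCLike.re_mul_ofReal, mul_eq_zero,
    or_iff_left hr.ne']

lemma PosSemidef.mulVec_eq_zero_of_re_star_dotProduct_mulVec_eq_zero {R : Matrix ι ι 𝕜}
    (hR : R.PosSemidef) {v : ι → 𝕜} (h : RCLike.re (star v ⬝ᵥ R *ᵥ v) = 0) : R *ᵥ v = 0 := by
  have him := (RCLike.nonneg_iff.mp (hR.dotProduct_mulVec_nonneg v)).2
  exact (hR.dotProduct_mulVec_zero_iff v).mp (RCLike.ext (by simpa using h) (by simpa using him))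

end Matrix

/-- For `J` skew-Hermitian and `R` Hermitian positive semi-definite, `J - R` has an
eigenvalue on the imaginary axis iff some eigenvector of `J` lies in the kernel of `R`. -/
theorem stmt_0 (n : ℕ) (J R : Matrix (Fin n) (Fin n) ℂ)
    (hJ : Jᴴ = -J) (hR : R.PosSemidef) :
    (∃ (lam : ℂ) (v : Fin n → ℂ), v ≠ 0 ∧ (J - R) *ᵥ v = lam • v ∧ lam.re = 0) ↔
    (∃ (mu : ℂ) (v : Fin n → ℂ), v ≠ 0 ∧ J *ᵥ v = mu • v ∧ R *ᵥ v = 0) := by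
  have hJv := re_star_dotProduct_mulVec_eq_zero_of_conjTranspose_eq_neg hJ
  constructor
  · rintro ⟨lam, v, hv, heig, hre⟩
    have hJRv := (re_eq_zero_iff_re_star_dotProduct_mulVec_eq_zero hv heig).mp hre
    have hRv : R *ᵥ v = 0 := by
      refine hR.mulVec_eq_zero_of_re_star_dotProduct_mulVec_eq_zero ?_
      rw [sub_mulVec, dotProduct_sub, map_sub, hJv] at hJRv
      simpa using hJRv
    refine ⟨lam, v, hv, ?_, hRv⟩
    rwa [sub_mulVec, hRv, sub_zero] at heig
  · rintro ⟨mu, v, hv, heig, hRv⟩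
    refine ⟨mu, v, hv, by rw [sub_mulVec, hRv, sub_zero, heig], ?_⟩
    exact (re_eq_zero_iff_re_star_dotProduct_mulVec_eq_zero hv heig).mpr (hJv v)
end

section
/- Let J, R be n×n complex matrices with J skew-Hermitian and R Hermitian positive semi-definite. If there exists m ∈ ℕ such that rank of the block matrix [R, JR, J²R, …, J^m R] equals n, then the matrix T_m := Σ_{j=0}^{m} J^j R (J^H)^j is Hermitian positive definite. -/
open Matrix
open scoped ComplexOrder

/-!
Each summand `J^j R (J^j)ᴴ` of `T_m` is positive semidefinite, so the kernel of `T_m` is the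
intersection of the kernels of the summands, i.e. the set of `x` with `R (J^j)ᴴ x = 0` for all
`j ≤ m`. Those are precisely the blocks of `Kᴴ x` for `K = [R, JR, …, J^m R]`, and `K` has full
row rank, so the kernel is trivial.
-/

namespace Matrix

variable {m n : Type*} [Fintype n]

theorem eq_zero_of_mulVec_eq_zero_of_rank_eq_card {K : Type*} [Field K] {A : Matrix m n K}
    (hA : A.rank = Fintype.card n) {x : n → K} (hx : A *ᵥ x = 0) : x = 0 := by
  have hker : Module.finrank K (LinearMap.ker A.mulVecLin) = 0 := by
    have := LinearMap.finrank_range_add_finrank_ker A.mulVecLin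
    rw [Module.finrank_fintype_fun_eq_card] at this
    change A.rank + _ = _ at this
    omega
  have hmem : x ∈ LinearMap.ker A.mulVecLin := hx
  rwa [Submodule.finrank_eq_zero.mp hker, Submodule.mem_bot] at hmem

variable {𝕜 : Type*} [RCLike 𝕜]

theorem sum_mulVec_eq_zero_iff_of_posSemidef {ι : Type*} {s : Finset ι}
    {A : ι → Matrix n n 𝕜} (hA : ∀ i ∈ s, (A i).PosSemidef) (x : n → 𝕜) :
    (∑ i ∈ s, A i) *ᵥ x = 0 ↔ ∀ i ∈ s, A i *ᵥ x = 0 := by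
  rw [← (posSemidef_sum s hA).dotProduct_mulVec_zero_iff, sum_mulVec, dotProduct_sum,
    Finset.sum_eq_zero_iff_of_nonneg fun i hi => (hA i hi).dotProduct_mulVec_nonneg x]
  exact forall₂_congr fun i hi => (hA i hi).dotProduct_mulVec_zero_iff x

theorem PosSemidef.posDef_of_mulVec_eq_zero {A : Matrix n n 𝕜} (hA : A.PosSemidef)
    (h : ∀ x, A *ᵥ x = 0 → x = 0) : A.PosDef := by
  refine posDef_iff_dotProduct_mulVec.mpr ⟨hA.isHermitian, fun x hx => ?_⟩
  refine (hA.dotProduct_mulVec_nonneg x).lt_of_ne' fun h0 => hx (h x ?_)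
  exact (hA.dotProduct_mulVec_zero_iff x).mp h0

theorem PosSemidef.mul_mul_conjTranspose_mulVec_eq_zero_iff [Fintype m] {R : Matrix n n 𝕜}
    (hR : R.PosSemidef) (A : Matrix m n 𝕜) (x : m → 𝕜) :
    (A * R * Aᴴ) *ᵥ x = 0 ↔ R *ᵥ (Aᴴ *ᵥ x) = 0 := by
  rw [← (hR.mul_mul_conjTranspose_same A).dotProduct_mulVec_zero_iff,
    ← hR.dotProduct_mulVec_zero_iff, ← mulVec_mulVec, ← mulVec_mulVec, dotProduct_mulVec,
    star_mulVec, conjTranspose_conjTranspose, dotProduct_mulVec]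

end Matrix

theorem stmt_2_general (n : ℕ) (J R : Matrix (Fin n) (Fin n) ℂ)
    (hR : R.PosSemidef) (m : ℕ)
    (hrank : (Matrix.of fun (i : Fin n) (p : Fin (m + 1) × Fin n) =>
      (J ^ (p.1 : ℕ) * R) i p.2).rank = n) :
    (∑ j ∈ Finset.range (m + 1), J ^ j * R * (Jᴴ) ^ j).PosDef := by
  have hterm : ∀ j ∈ Finset.range (m + 1), (J ^ j * R * (Jᴴ) ^ j).PosSemidef := fun j _ => by
    simpa [conjTranspose_pow] using hR.mul_mul_conjTranspose_same (J ^ j)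
  refine (posSemidef_sum _ hterm).posDef_of_mulVec_eq_zero fun x hx => ?_
  rw [sum_mulVec_eq_zero_iff_of_posSemidef hterm] at hx
  refine eq_zero_of_mulVec_eq_zero_of_rank_eq_card
    (A := (of fun (i : Fin n) (p : Fin (m + 1) × Fin n) => (J ^ (p.1 : ℕ) * R) i p.2)ᴴ)
    (by rw [rank_conjTranspose, hrank, Fintype.card_fin]) (funext fun ⟨j, k⟩ => ?_)
  have hj := hx j (Finset.mem_range.mpr j.isLt)
  rw [← conjTranspose_pow, hR.mul_mul_conjTranspose_mulVec_eq_zero_iff, mulVec_mulVec,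
    ← hR.isHermitian.eq, ← conjTranspose_mul] at hj
  -- the `(j, k)` entry of `Kᴴ *ᵥ x` is definitionally `((J ^ j * R)ᴴ *ᵥ x) k`
  exact congrFun hj k

/-- If the Kalman-type rank condition `rank [R, JR, …, J^m R] = n` holds, then
`T_m = ∑_{j=0}^m J^j R (Jᴴ)^j` is Hermitian positive definite. -/
theorem stmt_2 (n : ℕ) (J R : Matrix (Fin n) (Fin n) ℂ)
    (hJ : Jᴴ = -J) (hR : R.PosSemidef) (m : ℕ)
    (hrank : (Matrix.of fun (i : Fin n) (p : Fin (m + 1) × Fin n) =>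
      (J ^ (p.1 : ℕ) * R) i p.2).rank = n) :
    (∑ j ∈ Finset.range (m + 1), J ^ j * R * (Jᴴ) ^ j).PosDef :=
  stmt_2_general n J R hR m hrank
end

section
/- Let J, R be n×n complex matrices with J skew-Hermitian and R Hermitian positive semi-definite. If no eigenvector of J lies in the kernel of R, then rank [λI - J, R] = n for every λ ∈ ℂ. -/
open Matrix
open scoped ComplexOrder

/-! A nonzero `v` with `v ᵥ* (λ • 1 - J) = 0` and `v ᵥ* R = 0` would, after conjugation, give
`J *ᵥ star v = -star λ • star v` (as `Jᴴ = -J`) and `R *ᵥ star v = 0` (as `Rᴴ = R`): an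
eigenvector of `J` in the kernel of `R`. So the rows of `[λI - J, R]` are independent. -/

namespace Matrix

variable {m n p α : Type*} [Fintype m] [Fintype n] [Fintype p]

theorem rank_fromCols_eq_card_of_vecMul_eq_zero [Field α] {A : Matrix m n α} {B : Matrix m p α}
    (h : ∀ v : m → α, v ᵥ* A = 0 → v ᵥ* B = 0 → v = 0) :
    (fromCols A B).rank = Fintype.card m := by
  refine LinearIndependent.rank_matrix (vecMul_injective_iff.mp ?_)
  rw [← coe_vecMulLinear, injective_iff_map_eq_zero]
  intro v hv
  rw [vecMulLinear_apply, vecMul_fromCols] at hv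
  exact h v (funext fun i => congrFun hv (.inl i)) (funext fun j => congrFun hv (.inr j))

variable [CommRing α] [StarRing α]

theorem mulVec_star_eq_of_vecMul_eq_smul {J : Matrix n n α} (hJ : Jᴴ = -J) {μ : α} {v : n → α}
    (hv : v ᵥ* J = μ • v) : J *ᵥ star v = -star μ • star v := by
  have h := congrArg star hv
  rw [star_vecMul, hJ, neg_mulVec, star_smul] at h
  rw [neg_smul, ← h, neg_neg]

theorem IsHermitian.mulVec_star_eq_zero_of_vecMul_eq_zero {R : Matrix n n α} (hR : R.IsHermitian)
    {v : n → α} (hv : v ᵥ* R = 0) : R *ᵥ star v = 0 := by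
  simpa [star_vecMul, hR.eq] using congrArg star hv

end Matrix

/-- If no eigenvector of `J` lies in the kernel of `R`, then
`rank [λI - J, R] = n` for every `λ ∈ ℂ`. -/
theorem stmt_4 (n : ℕ) (J R : Matrix (Fin n) (Fin n) ℂ)
    (hJ : Jᴴ = -J) (hR : R.PosSemidef)
    (h : ∀ (lam : ℂ) (v : Fin n → ℂ), v ≠ 0 → J *ᵥ v = lam • v → R *ᵥ v ≠ 0) :
    ∀ lam : ℂ, (Matrix.fromCols (lam • (1 : Matrix (Fin n) (Fin n) ℂ) - J) R).rank = n := by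
  intro lam
  refine (rank_fromCols_eq_card_of_vecMul_eq_zero fun v hvA hvR => ?_).trans (Fintype.card_fin n)
  have hvJ : v ᵥ* J = lam • v := by
    rw [vecMul_sub, vecMul_smul, vecMul_one, sub_eq_zero] at hvA
    exact hvA.symm
  by_contra hv
  exact h _ (star v) (star_ne_zero.mpr hv) (mulVec_star_eq_of_vecMul_eq_smul hJ hvJ)
    (hR.isHermitian.mulVec_star_eq_zero_of_vecMul_eq_zero hvR)
end

section
/- Let J, R be n×n complex matrices with J skew-Hermitian, R Hermitian positive semi-definite, and suppose no eigenvector of J lies in the kernel of R. Then every eigenvalue of J - R has strictly negative real part. -/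
open Matrix
open scoped ComplexOrder

/-!
Pair the eigenvalue equation `(J - R) v = λ v` with `v`: since `v* J v` is purely imaginary,
`Re λ · ‖v‖² = -v* R v ≤ 0`. If `Re λ = 0`, then `v* R v = 0`, which for a positive semidefinite `R`
forces `R v = 0`; then `J v = λ v` exhibits an eigenvector of `J` in the kernel of `R`.
-/

namespace Matrix

variable {ι : Type*} [Fintype ι]

theorem re_dotProduct_mulVec_eq_zero_of_conjTranspose_eq_neg {J : Matrix ι ι ℂ} (hJ : Jᴴ = -J)
    (v : ι → ℂ) : (star v ⬝ᵥ (J *ᵥ v)).re = 0 := by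
  have hstar : star (star v ⬝ᵥ (J *ᵥ v)) = -(star v ⬝ᵥ (J *ᵥ v)) := by
    rw [← star_dotProduct, star_mulVec, hJ, dotProduct_mulVec, vecMul_neg, neg_dotProduct]
  have hre := congrArg Complex.re hstar
  rw [Complex.star_def, Complex.conj_re, Complex.neg_re] at hre
  linarith

theorem re_mul_re_dotProduct_star_self_of_sub_mulVec_eq_smul {J R : Matrix ι ι ℂ}
    (hJ : Jᴴ = -J) {lam : ℂ} {v : ι → ℂ} (hev : (J - R) *ᵥ v = lam • v) :
    lam.re * (star v ⬝ᵥ v).re = -(star v ⬝ᵥ (R *ᵥ v)).re := by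
  have hself_im : (star v ⬝ᵥ v).im = 0 :=
    (Complex.nonneg_iff.mp (dotProduct_star_self_nonneg v)).2.symm
  have hpair : star v ⬝ᵥ (J *ᵥ v) - star v ⬝ᵥ (R *ᵥ v) = lam * (star v ⬝ᵥ v) := by
    rw [← dotProduct_sub, ← sub_mulVec, hev, dotProduct_smul, smul_eq_mul]
  have hre := congrArg Complex.re hpair
  rw [Complex.sub_re, re_dotProduct_mulVec_eq_zero_of_conjTranspose_eq_neg hJ, Complex.mul_re,
    hself_im, mul_zero, sub_zero, zero_sub] at hre
  exact hre.symm

theorem PosSemidef.mulVec_eq_zero_of_re_dotProduct_mulVec_eq_zero {R : Matrix ι ι ℂ}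
    (hR : R.PosSemidef) {v : ι → ℂ} (hv : (star v ⬝ᵥ (R *ᵥ v)).re = 0) : R *ᵥ v = 0 := by
  refine (hR.dotProduct_mulVec_zero_iff v).mp (Complex.ext hv ?_)
  exact (Complex.nonneg_iff.mp (hR.dotProduct_mulVec_nonneg v)).2.symm

end Matrix

/-- If no eigenvector of `J` lies in the kernel of `R`, then every eigenvalue of
`J - R` has strictly negative real part (negative hypocoercivity). -/
theorem stmt_7 (n : ℕ) (J R : Matrix (Fin n) (Fin n) ℂ)
    (hJ : Jᴴ = -J) (hR : R.PosSemidef)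
    (h : ∀ (mu : ℂ) (v : Fin n → ℂ), v ≠ 0 → J *ᵥ v = mu • v → R *ᵥ v ≠ 0) :
    ∀ (lam : ℂ) (v : Fin n → ℂ), v ≠ 0 → (J - R) *ᵥ v = lam • v → lam.re < 0 := by
  intro lam v hv hev
  have hself : 0 < (star v ⬝ᵥ v).re := (Complex.pos_iff.mp (dotProduct_star_self_pos_iff.mpr hv)).1
  have hRv_nonneg : 0 ≤ (star v ⬝ᵥ (R *ᵥ v)).re :=
    (Complex.nonneg_iff.mp (hR.dotProduct_mulVec_nonneg v)).1
  have hkey := re_mul_re_dotProduct_star_self_of_sub_mulVec_eq_smul hJ hev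
  have hle : lam.re ≤ 0 := nonpos_of_mul_nonpos_left (by linarith) hself
  refine hle.lt_of_ne fun hlam => ?_
  rw [hlam, zero_mul] at hkey
  have hRv : R *ᵥ v = 0 := hR.mulVec_eq_zero_of_re_dotProduct_mulVec_eq_zero (by linarith)
  exact h lam v hv (by rwa [sub_mulVec, hRv, sub_zero] at hev) hRv
end

section
/- Let J, R be n×n complex matrices with J skew-Hermitian and R Hermitian positive semi-definite, and let λ = iω (ω ∈ ℝ) be an eigenvalue of J - R. Then λ is semi-simple, i.e. the kernel of (J - R - λI)² equals the kernel of (J - R - λI). -/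
open Matrix
open scoped ComplexOrder

/-- A purely imaginary eigenvalue `λ = iω` of `J - R` is semi-simple:
`ker ((J - R - λI)²) = ker (J - R - λI)`. -/
theorem stmt_8 (n : ℕ) (J R : Matrix (Fin n) (Fin n) ℂ)
    (hJ : Jᴴ = -J) (hR : R.PosSemidef) (ω : ℝ) (lam : ℂ) (hlam : lam = Complex.I * ω)
    (hev : ∃ v : Fin n → ℂ, v ≠ 0 ∧ (J - R) *ᵥ v = lam • v) :
    ∀ v : Fin n → ℂ,
      ((J - R - lam • (1 : Matrix (Fin n) (Fin n) ℂ)) ^ 2) *ᵥ v = 0 ↔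
      (J - R - lam • (1 : Matrix (Fin n) (Fin n) ℂ)) *ᵥ v = 0 := by
  set A := J - R - lam • (1 : Matrix (Fin n) (Fin n) ℂ) with hA
  have hstar : star lam = -lam := by
    rw [hlam]; simp [Complex.ext_iff]
  have hAH : Aᴴ = -A - (2:ℂ) • R := by
    rw [hA, conjTranspose_sub, conjTranspose_sub, conjTranspose_smul, conjTranspose_one,
      hJ, hR.1.eq, hstar]
    module
  intro v
  constructor
  · intro h2
    set w := A *ᵥ v with hw
    have hAw : A *ᵥ w = 0 := by
      rw [hw, mulVec_mulVec, ← sq]; exact h2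
    have hRw : R *ᵥ w = 0 := by
      rw [← hR.dotProduct_mulVec_zero_iff]
      have h1 : star w ⬝ᵥ (A *ᵥ w) = 0 := by rw [hAw, dotProduct_zero]
      have h2' : star w ⬝ᵥ (Aᴴ *ᵥ w) = 0 := by
        rw [dotProduct_mulVec, ← star_mulVec, hAw, star_zero, zero_dotProduct]
      have key : star w ⬝ᵥ ((-A - (2:ℂ) • R) *ᵥ w) = 0 := by rw [← hAH]; exact h2'
      rw [sub_mulVec, neg_mulVec, smul_mulVec, dotProduct_sub, dotProduct_neg, h1,
        neg_zero, zero_sub, dotProduct_smul, neg_eq_zero, smul_eq_zero] at key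
      rcases key with h | h
      · norm_num at h
      · exact h
    have hAHw : Aᴴ *ᵥ w = 0 := by
      rw [hAH, sub_mulVec, neg_mulVec, hAw, smul_mulVec, hRw, neg_zero, smul_zero,
        sub_zero]
    have : star w ⬝ᵥ w = 0 := by
      have : star w ᵥ* A = 0 := by
        have := congrArg star hAHw
        rwa [star_mulVec, conjTranspose_conjTranspose, star_zero] at this
      rw [hw, dotProduct_mulVec, this, zero_dotProduct]
    have hw0 : w = 0 := by
      rwa [dotProduct_star_self_eq_zero] at this
    exact hw0
  · intro h
    rw [sq, ← mulVec_mulVec, h, mulVec_zero]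
end

section
/- Let A ∈ ℂ^{n×n} be semi-dissipative, i.e. its Hermitian part (A + A^H)/2 is negative semi-definite, partitioned as A = [[A11, A12],[A21, A22]] with A22 ∈ ℂ^{q×q} invertible. Then the Schur complement A11 - A12 A22^{-1} A21 is also semi-dissipative. -/
open Matrix
open scoped ComplexOrder

/- The Schur complement `A₁₁ - A₁₂ A₂₂⁻¹ A₂₁` is the top-left block of the congruence `Eᴴ A E`
with `E = [[1, 0], [-A₂₂⁻¹ A₂₁, 1]]`. Congruences and principal submatrices of a positive
semidefinite matrix are positive semidefinite, and both operations commute with taking the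
Hermitian part, so semi-dissipativity passes from `A` to `Eᴴ A E` and then to its top-left block. -/

namespace Matrix

section SemiDissipative

variable {𝕜 m n : Type*} [RCLike 𝕜]

def IsSemiDissipative (M : Matrix n n 𝕜) : Prop :=
  (-((1 / 2 : 𝕜) • (M + Mᴴ))).PosSemidef

theorem IsSemiDissipative.submatrix {M : Matrix n n 𝕜} (hM : M.IsSemiDissipative)
    (e : m → n) : (M.submatrix e e).IsSemiDissipative := by
  unfold IsSemiDissipative at hM ⊢
  convert hM.submatrix e using 1
  ext i j
  simp

theorem IsSemiDissipative.conjTranspose_mul_mul_same [Fintype n] [Finite m]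
    {M : Matrix n n 𝕜} (hM : M.IsSemiDissipative) (E : Matrix n m 𝕜) :
    (Eᴴ * M * E).IsSemiDissipative := by
  have hconj : Eᴴ * (-((1 / 2 : 𝕜) • (M + Mᴴ))) * E =
      -((1 / 2 : 𝕜) • (Eᴴ * M * E + (Eᴴ * M * E)ᴴ)) := by
    simp only [conjTranspose_mul, conjTranspose_conjTranspose, Matrix.mul_neg, Matrix.neg_mul,
      Matrix.mul_smul, Matrix.smul_mul, Matrix.mul_add, Matrix.add_mul, Matrix.mul_assoc]
  rw [IsSemiDissipative, ← hconj]
  exact Matrix.PosSemidef.conjTranspose_mul_mul_same hM E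

theorem IsSemiDissipative.toBlocks₁₁ {M : Matrix (m ⊕ n) (m ⊕ n) 𝕜}
    (hM : M.IsSemiDissipative) : M.toBlocks₁₁.IsSemiDissipative :=
  hM.submatrix Sum.inl

end SemiDissipative

theorem toBlocks₁₁_conjTranspose_mul_fromBlocks_mul_eq_schur {R m n : Type*} [CommRing R]
    [StarRing R] [Fintype m] [Fintype n] [DecidableEq m] [DecidableEq n]
    (A : Matrix m m R) (B : Matrix m n R) (C : Matrix n m R) {D : Matrix n n R} (hD : IsUnit D) :
    ((fromBlocks 1 0 (-(D⁻¹ * C)) 1)ᴴ * fromBlocks A B C D * fromBlocks 1 0 (-(D⁻¹ * C)) 1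
      ).toBlocks₁₁ = A - B * D⁻¹ * C := by
  have hDC : D * (D⁻¹ * C) = C :=
    mul_nonsing_inv_cancel_left D C ((isUnit_iff_isUnit_det D).mp hD)
  rw [fromBlocks_conjTranspose, fromBlocks_multiply, fromBlocks_multiply, toBlocks_fromBlocks₁₁]
  simp [Matrix.add_mul, Matrix.mul_assoc, hDC, sub_eq_add_neg]

end Matrix

/-- Schur complements of semi-dissipative matrices are semi-dissipative: if the Hermitian
part of `A = [[A11, A12],[A21, A22]]` is negative semi-definite and `A22` is invertible,
then the Hermitian part of `A11 - A12 A22⁻¹ A21` is negative semi-definite. -/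
theorem stmt_14 (p q : ℕ)
    (A11 : Matrix (Fin p) (Fin p) ℂ) (A12 : Matrix (Fin p) (Fin q) ℂ)
    (A21 : Matrix (Fin q) (Fin p) ℂ) (A22 : Matrix (Fin q) (Fin q) ℂ)
    (hA : (-((1 / 2 : ℂ) • (Matrix.fromBlocks A11 A12 A21 A22 +
      (Matrix.fromBlocks A11 A12 A21 A22)ᴴ))).PosSemidef)
    (hA22 : IsUnit A22) :
    (-((1 / 2 : ℂ) • ((A11 - A12 * A22⁻¹ * A21) +
      (A11 - A12 * A22⁻¹ * A21)ᴴ))).PosSemidef := by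
  have hA' : (fromBlocks A11 A12 A21 A22).IsSemiDissipative := hA
  have hS := (hA'.conjTranspose_mul_mul_same
    (fromBlocks 1 0 (-(A22⁻¹ * A21)) (1 : Matrix (Fin q) (Fin q) ℂ))).toBlocks₁₁
  rwa [toBlocks₁₁_conjTranspose_mul_fromBlocks_mul_eq_schur A11 A12 A21 hA22] at hS
end

section
/- Let E, J, R ∈ ℂ^{n×n} with E = E^H ⪰ 0, J = -J^H, R = R^H ⪰ 0, and suppose det(λ₀ E - (J - R)) ≠ 0 for some λ₀ ∈ ℂ (the pencil λE - (J-R) is regular). If λ ∈ ℂ is a finite eigenvalue of the pencil, i.e. det(λ E - (J - R)) = 0, then Re(λ) ≤ 0. -/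
/-!
If `λ E v = (J - R) v` with `v ≠ 0`, pairing with `v` gives `Re λ · v*Ev = -v*Rv ≤ 0`, because
`v*Jv` is purely imaginary. When `v*Ev > 0` this forces `Re λ ≤ 0`. Otherwise `Ev = 0`, hence
`(J - R) v = 0`, and `v` is a common kernel vector of every `μ E - (J - R)`, so the pencil is
singular.
-/

open Matrix
open scoped ComplexOrder

variable {ι : Type*} [Fintype ι]

theorem Matrix.det_smul_sub_eq_zero_of_mulVec_eq_zero {A : Type*} [CommRing A] [IsDomain A]
    [DecidableEq ι] {E M : Matrix ι ι A} {v : ι → A} (hv : v ≠ 0) (hE : E *ᵥ v = 0)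
    (hM : M *ᵥ v = 0) (μ : A) : (μ • E - M).det = 0 :=
  exists_mulVec_eq_zero_iff.mp ⟨v, hv, by rw [sub_mulVec, smul_mulVec, hE, hM, smul_zero, sub_zero]⟩

variable {𝕜 : Type*} [RCLike 𝕜]

theorem Matrix.re_star_dotProduct_mulVec_eq_zero {J : Matrix ι ι 𝕜} (hJ : Jᴴ = -J) (v : ι → 𝕜) :
    RCLike.re (star v ⬝ᵥ (J *ᵥ v)) = 0 := by
  have hconj : star (star v ⬝ᵥ (J *ᵥ v)) = -(star v ⬝ᵥ (J *ᵥ v)) := by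
    rw [← star_dotProduct_star, star_mulVec, star_star, ← dotProduct_mulVec, hJ, neg_mulVec,
      dotProduct_neg]
  have hre := congrArg RCLike.re hconj
  rw [RCLike.star_def, RCLike.conj_re, map_neg] at hre
  linarith

theorem Matrix.re_le_zero_of_smul_mulVec_eq {E J R : Matrix ι ι 𝕜} (hE : E.PosSemidef)
    (hJ : Jᴴ = -J) (hR : R.PosSemidef) {lam : 𝕜} {v : ι → 𝕜}
    (hEv : E *ᵥ v ≠ 0) (h : lam • (E *ᵥ v) = (J - R) *ᵥ v) : RCLike.re lam ≤ 0 := by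
  have hpos : 0 < star v ⬝ᵥ (E *ᵥ v) :=
    (hE.dotProduct_mulVec_nonneg v).lt_of_ne' ((hE.dotProduct_mulVec_zero_iff v).not.mpr hEv)
  obtain ⟨hEre, hEim⟩ := RCLike.pos_iff.mp hpos
  have hRre := (RCLike.nonneg_iff.mp (hR.dotProduct_mulVec_nonneg v)).1
  have hquad : lam * star v ⬝ᵥ (E *ᵥ v) = star v ⬝ᵥ (J *ᵥ v) - star v ⬝ᵥ (R *ᵥ v) := by
    rw [← smul_eq_mul, ← dotProduct_smul, h, sub_mulVec, dotProduct_sub]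
  have hre := congrArg RCLike.re hquad
  rw [RCLike.mul_re, hEim, mul_zero, sub_zero, map_sub, re_star_dotProduct_mulVec_eq_zero hJ,
    zero_sub] at hre
  nlinarith

/-- For a regular semi-dissipative Hamiltonian pencil `λE - (J - R)` with `E ⪰ 0`
Hermitian, `J` skew-Hermitian and `R ⪰ 0` Hermitian, every finite eigenvalue `λ`
(i.e. `det(λE - (J - R)) = 0`) satisfies `Re λ ≤ 0`. -/
theorem stmt_17 (n : ℕ) (E J R : Matrix (Fin n) (Fin n) ℂ)
    (hE : E.PosSemidef) (hJ : Jᴴ = -J) (hR : R.PosSemidef)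
    (hreg : ∃ lam₀ : ℂ, (lam₀ • E - (J - R)).det ≠ 0) :
    ∀ lam : ℂ, (lam • E - (J - R)).det = 0 → lam.re ≤ 0 := by
  intro lam hdet
  obtain ⟨v, hv, hpencil⟩ := exists_mulVec_eq_zero_iff.mpr hdet
  have heig : lam • (E *ᵥ v) = (J - R) *ᵥ v := by
    rwa [sub_mulVec, smul_mulVec, sub_eq_zero] at hpencil
  by_cases hEv : E *ᵥ v = 0
  · obtain ⟨lam₀, hlam₀⟩ := hreg
    have hJRv : (J - R) *ᵥ v = 0 := by rw [← heig, hEv, smul_zero]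
    exact absurd (det_smul_sub_eq_zero_of_mulVec_eq_zero hv hEv hJRv lam₀) hlam₀
  · exact re_le_zero_of_smul_mulVec_eq hE hJ hR hEv heig
end

section
/- Let J, R be n×n complex matrices with J skew-Hermitian, R Hermitian positive semi-definite, and rank[R, JR, …, J^{n-1}R] = n. Then there exist constants c ≥ 1 and μ > 0 such that ‖e^{(J-R)t} x₀‖ ≤ c e^{-μt} ‖x₀‖ for all x₀ ∈ ℂ^n and all t ≥ 0. -/
/-!
Every eigenvalue `z` of `J - R` has negative real part. For an eigenvector `v`, taking the real
part of `v* (J - R) v = z ‖v‖²` kills the skew-Hermitian term and gives `Re z ‖v‖² = -v* R v ≤ 0`.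
If `Re z = 0`, then `R v = 0` and `J v = z v`, so `v*` is a left eigenvector of `J` that annihilates
`R`, hence every `J^k R`: this contradicts the Kalman rank condition (the Hautus test).

Exponential decay then holds in any complex Banach algebra for an `a` whose spectrum lies in the
open left half-plane. By compactness of the spectrum there is `μ > 0` with `b = a + μ` still having
spectrum there. Since `σ(exp b) ⊆ exp(σ b)` (read off the characters of the bicommutant of `b`),
`exp b` has spectral radius `< 1`, so its powers are bounded by Gelfand's formula, and
`exp (t b) = (exp b)^⌊t⌋ exp ((t - ⌊t⌋) b)` is bounded for `t ≥ 0`; that is,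
`‖exp (t a)‖ ≤ C e^{-μ t}`. For matrices we use the operator norm of `ℂⁿ` with its Euclidean norm.
-/

open NormedSpace

theorem Subalgebra.isUnit_of_isUnit_val_centralizer {R 𝔸 : Type*} [CommSemiring R] [Ring 𝔸]
    [Algebra R 𝔸] {s : Set 𝔸} {x : Subalgebra.centralizer R s} (hx : IsUnit (x : 𝔸)) :
    IsUnit x := by
  obtain ⟨u, hu⟩ := hx
  have hinv : (↑u⁻¹ : 𝔸) ∈ Subalgebra.centralizer R s := by
    rw [Subalgebra.mem_centralizer_iff]
    intro g hg
    have : Commute g u := hu ▸ (Subalgebra.mem_centralizer_iff R).mp x.2 g hg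
    exact this.units_inv_right.eq
  exact ⟨⟨x, ⟨_, hinv⟩, Subtype.ext <| by simp [← hu], Subtype.ext <| by simp [← hu]⟩, rfl⟩

section BanachAlgebra

variable {𝔸 : Type*} [NormedRing 𝔸] [NormedAlgebra ℂ 𝔸] [CompleteSpace 𝔸]

theorem spectrum.exp_subset_exp_image (a : 𝔸) :
    spectrum ℂ (exp a) ⊆ Complex.exp '' spectrum ℂ a := by
  let : NormedAlgebra ℚ 𝔸 := .restrictScalars ℚ ℂ 𝔸
  -- The bicommutant of `a` is closed, commutative and inverse-closed, so spectra computed in it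
  -- are the spectra in `𝔸`, and they are the value sets of its characters.
  set B := Subalgebra.centralizer ℂ (Subalgebra.centralizer ℂ {a} : Set 𝔸)
  let : NormedCommRing B :=
    { (inferInstance : NormedRing B) with
      mul_comm := fun x y => Subtype.ext <|
        Set.centralizer_centralizer_comm_of_comm (by simp) _ x.2 _ y.2 }
  have : CompleteSpace B := (Set.isClosed_centralizer _).completeSpace_coe
  let : NormedAlgebra ℚ B := .restrictScalars ℚ ℂ B
  have hspec (b : B) : spectrum ℂ b = spectrum ℂ (b : 𝔸) := by
    refine subset_antisymm (fun r hr hunit => hr ?_) (spectrum.subset_subalgebra b)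
    exact Subalgebra.isUnit_of_isUnit_val_centralizer
      (by simpa [spectrum.mem_resolventSet_iff] using hunit)
  let a' : B := ⟨a, Set.subset_centralizer_centralizer rfl⟩
  have hexp : ((exp a' : B) : 𝔸) = exp a := map_exp B.val continuous_subtype_val a'
  intro z hz
  rw [← hexp, ← hspec, WeakDual.CharacterSpace.mem_spectrum_iff_exists] at hz
  obtain ⟨φ, rfl⟩ := hz
  refine ⟨φ a', hspec a' ▸ AlgHom.apply_mem_spectrum φ a', ?_⟩
  rw [Complex.exp_eq_exp_ℂ, map_exp φ (map_continuous φ)]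

theorem spectrum.spectralRadius_exp_lt_one {a : 𝔸} (ha : ∀ z ∈ spectrum ℂ a, z.re < 0) :
    spectralRadius ℂ (exp a) < 1 := by
  rcases (spectrum ℂ (exp a)).eq_empty_or_nonempty with h | h
  · simp [spectralRadius, h]
  refine spectrum.spectralRadius_lt_of_forall_lt_of_nonempty h fun w hw => ?_
  obtain ⟨z, hz, rfl⟩ := spectrum.exp_subset_exp_image a hw
  rw [← NNReal.coe_lt_coe, coe_nnnorm, Complex.norm_exp]
  exact Real.exp_lt_one_iff.mpr (ha z hz)

open Filter in
theorem spectrum.exists_norm_pow_le_of_spectralRadius_lt_one {b : 𝔸}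
    (hb : spectralRadius ℂ b < 1) : ∃ C, ∀ k : ℕ, ‖b ^ k‖ ≤ C := by
  have hev : ∀ᶠ k : ℕ in atTop, ‖b ^ k‖ ≤ 1 := by
    filter_upwards [(pow_nnnorm_pow_one_div_tendsto_nhds_spectralRadius b).eventually_lt_const hb,
      eventually_gt_atTop 0] with k hk hk0
    rw [one_div, ENNReal.rpow_inv_lt_iff (by positivity), ENNReal.one_rpow,
      ENNReal.coe_lt_one_iff] at hk
    exact hk.le
  obtain ⟨C, hC⟩ := (isBoundedUnder_of_eventually_le hev).bddAbove_range
  exact ⟨C, fun k => hC ⟨k, rfl⟩⟩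

theorem exists_norm_exp_smul_le_of_spectralRadius_exp_lt_one {b : 𝔸}
    (hb : spectralRadius ℂ (exp b) < 1) : ∃ C, ∀ t : ℝ, 0 ≤ t → ‖exp (t • b)‖ ≤ C := by
  let : NormedAlgebra ℚ 𝔸 := .restrictScalars ℚ ℂ 𝔸
  obtain ⟨C₀, hC₀⟩ := spectrum.exists_norm_pow_le_of_spectralRadius_lt_one hb
  obtain ⟨C₁, hC₁⟩ := (isCompact_Icc (a := (0 : ℝ)) (b := 1)).exists_bound_of_continuousOn
    (f := fun s : ℝ => exp (s • b))
    (exp_continuous.comp (continuous_id.smul continuous_const)).continuousOn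
  refine ⟨C₀ * C₁, fun t ht => ?_⟩
  set s := t - ⌊t⌋₊
  have hs : s ∈ Set.Icc (0 : ℝ) 1 :=
    ⟨sub_nonneg.mpr (Nat.floor_le ht), by linarith [Nat.lt_floor_add_one t]⟩
  have hsplit : exp (t • b) = exp b ^ ⌊t⌋₊ * exp (s • b) := by
    rw [← exp_nsmul, ← exp_add_of_commute ((Commute.refl b).smul_left _ |>.smul_right _),
      ← Nat.cast_smul_eq_nsmul ℝ, ← add_smul, add_sub_cancel]
  calc ‖exp (t • b)‖ ≤ ‖exp b ^ ⌊t⌋₊‖ * ‖exp (s • b)‖ := hsplit ▸ norm_mul_le _ _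
    _ ≤ C₀ * C₁ := mul_le_mul (hC₀ _) (hC₁ s hs) (norm_nonneg _) ((norm_nonneg _).trans (hC₀ 0))

theorem exists_norm_exp_smul_le_of_forall_re_lt_zero {a : 𝔸}
    (ha : ∀ z ∈ spectrum ℂ a, z.re < 0) :
    ∃ C μ : ℝ, 0 < μ ∧ ∀ t : ℝ, 0 ≤ t → ‖exp (t • a)‖ ≤ C * Real.exp (-μ * t) := by
  let : NormedAlgebra ℚ 𝔸 := .restrictScalars ℚ ℂ 𝔸
  obtain ⟨μ, hμ, hμa⟩ : ∃ μ : ℝ, 0 < μ ∧ ∀ z ∈ spectrum ℂ a, z.re + μ < 0 := by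
    rcases (spectrum ℂ a).eq_empty_or_nonempty with h | h
    · exact ⟨1, one_pos, by simp [h]⟩
    obtain ⟨z₀, hz₀, hmax⟩ :=
      (spectrum.isCompact a).exists_isMaxOn h Complex.continuous_re.continuousOn
    refine ⟨-z₀.re / 2, by linarith [ha z₀ hz₀], fun z hz => ?_⟩
    linarith [ha z₀ hz₀, show z.re ≤ z₀.re from hmax hz]
  set b := algebraMap ℂ 𝔸 μ + a
  have hb : ∀ w ∈ spectrum ℂ b, w.re < 0 := by
    rw [← spectrum.singleton_add_eq]
    rintro _ ⟨_, rfl, z, hz, rfl⟩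
    simpa [add_comm] using hμa z hz
  obtain ⟨C, hC⟩ :=
    exists_norm_exp_smul_le_of_spectralRadius_exp_lt_one (spectrum.spectralRadius_exp_lt_one hb)
  refine ⟨C, μ, hμ, fun t ht => ?_⟩
  have hshift : t • a = algebraMap ℂ 𝔸 (-μ * t : ℝ) + t • b := by
    simp only [b, smul_add, Algebra.algebraMap_eq_smul_one]
    rw [Complex.coe_smul, Complex.coe_smul, smul_smul, neg_mul, neg_smul, mul_comm,
      neg_add_cancel_left]
  rw [hshift, exp_add_of_commute (Algebra.commutes _ _), ← algebraMap_exp_comm,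
    ← Algebra.smul_def, norm_smul, ← Complex.exp_eq_exp_ℂ, Complex.norm_exp,
    Complex.ofReal_re, mul_comm C]
  exact mul_le_mul_of_nonneg_left (hC t ht) (Real.exp_nonneg _)

end BanachAlgebra

open scoped ComplexOrder

namespace Matrix

def kalmanMatrix {K m : Type*} [Semiring K] {n : ℕ} (A : Matrix (Fin n) (Fin n) K)
    (B : Matrix (Fin n) m K) : Matrix (Fin n) (Fin n × m) K :=
  of fun i p => (A ^ (p.1 : ℕ) * B) i p.2

theorem vecMul_pow_eq_smul {K n : Type*} [CommSemiring K] [Fintype n] [DecidableEq n]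
    {A : Matrix n n K} {w : n → K} {c : K} (h : w ᵥ* A = c • w) (k : ℕ) :
    w ᵥ* A ^ k = c ^ k • w := by
  induction k with
  | zero => simp
  | succ k ih => rw [pow_succ, ← vecMul_vecMul, ih, smul_vecMul, h, smul_smul, pow_succ]

theorem eq_zero_of_vecMul_eq_smul_of_vecMul_eq_zero {K m : Type*} [Field K] [Fintype m] {n : ℕ}
    {A : Matrix (Fin n) (Fin n) K} {B : Matrix (Fin n) m K} (hrank : (kalmanMatrix A B).rank = n)
    {w : Fin n → K} {c : K} (hA : w ᵥ* A = c • w) (hB : w ᵥ* B = 0) : w = 0 := by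
  have hrows : LinearIndependent K (kalmanMatrix A B).row := by
    rw [linearIndependent_iff_card_eq_finrank_span, Set.finrank, ← rank_eq_finrank_span_row,
      hrank, Fintype.card_fin]
  have hw : w ᵥ* kalmanMatrix A B = 0 := by
    ext ⟨k, j⟩
    change (w ᵥ* (A ^ (k : ℕ) * B)) j = 0
    rw [← vecMul_vecMul, vecMul_pow_eq_smul hA, smul_vecMul, hB, smul_zero, Pi.zero_apply]
  exact vecMul_injective_iff.mpr hrows (hw.trans (zero_vecMul _).symm)

theorem exists_mulVec_eq_smul_of_mem_spectrum {K n : Type*} [Field K] [Fintype n]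
    [DecidableEq n] {A : Matrix n n K} {z : K} (hz : z ∈ spectrum K A) :
    ∃ v ≠ 0, A *ᵥ v = z • v := by
  rw [← spectrum_toLin', ← Module.End.hasEigenvalue_iff_mem_spectrum] at hz
  obtain ⟨v, hv⟩ := hz.exists_hasEigenvector
  exact ⟨v, hv.2, hv.apply_eq_smul⟩

theorem re_star_dotProduct_mulVec_eq_zero_s18 {n : Type*} [Fintype n] {J : Matrix n n ℂ}
    (hJ : Jᴴ = -J) (v : n → ℂ) : (star v ⬝ᵥ J *ᵥ v).re = 0 := by
  have hiJ : (Complex.I • J).IsHermitian := by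
    simp [IsHermitian, conjTranspose_smul, hJ]
  simpa [smul_mulVec] using hiJ.im_star_dotProduct_mulVec_self v

theorem re_lt_zero_of_mem_spectrum_sub {n : ℕ} {J R : Matrix (Fin n) (Fin n) ℂ} (hJ : Jᴴ = -J)
    (hR : R.PosSemidef) (hrank : (kalmanMatrix J R).rank = n) {z : ℂ}
    (hz : z ∈ spectrum ℂ (J - R)) : z.re < 0 := by
  obtain ⟨v, hv0, hv⟩ := exists_mulVec_eq_smul_of_mem_spectrum hz
  obtain ⟨hvv_re, hvv_im⟩ := Complex.pos_iff.mp (dotProduct_star_self_pos_iff.mpr hv0)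
  obtain ⟨hRv_re, hRv_im⟩ := Complex.nonneg_iff.mp (hR.dotProduct_mulVec_nonneg v)
  have hbalance : z.re * (star v ⬝ᵥ v).re = -(star v ⬝ᵥ R *ᵥ v).re := by
    have := congrArg (fun u => (star v ⬝ᵥ u).re) hv
    simpa [sub_mulVec, dotProduct_sub, re_star_dotProduct_mulVec_eq_zero_s18 hJ, ← hvv_im]
      using this.symm
  refine (nonpos_of_mul_nonpos_left (by linarith) hvv_re).lt_of_ne fun hre => hv0 ?_
  have hRv : R *ᵥ v = 0 := by
    refine (hR.dotProduct_mulVec_zero_iff v).mp (Complex.ext ?_ hRv_im.symm)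
    simpa [hre] using hbalance.symm
  have hJv : J *ᵥ v = z • v := by simpa [sub_mulVec, hRv] using hv
  suffices star v = 0 from star_eq_zero.mp this
  refine eq_zero_of_vecMul_eq_smul_of_vecMul_eq_zero hrank (c := -star z) ?_ ?_
  · rw [neg_smul, ← star_smul, ← hJv, star_mulVec, hJ, vecMul_neg, neg_neg]
  · rw [← hR.1.eq, ← star_mulVec, hRv, star_zero]

open scoped Norms.L2Operator in
theorem exists_norm_exp_smul_mulVec_le {ι : Type*} [Fintype ι] [DecidableEq ι]
    {A : Matrix ι ι ℂ} (hA : ∀ z ∈ spectrum ℂ A, z.re < 0) :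
    ∃ C μ : ℝ, 0 < μ ∧ ∀ (x : ι → ℂ) (t : ℝ), 0 ≤ t →
      ‖(WithLp.equiv 2 (ι → ℂ)).symm (exp (t • A) *ᵥ x)‖ ≤
        C * Real.exp (-μ * t) * ‖(WithLp.equiv 2 (ι → ℂ)).symm x‖ := by
  obtain ⟨C, μ, hμ, hC⟩ := exists_norm_exp_smul_le_of_forall_re_lt_zero hA
  refine ⟨C, μ, hμ, fun x t ht => ?_⟩
  exact (l2_opNorm_mulVec _ _).trans (mul_le_mul_of_nonneg_right (hC t ht) (norm_nonneg _))

end Matrix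

open Matrix

/-- Under the Kalman rank condition `rank [R, JR, …, J^{n-1}R] = n`, the semigroup
`e^{(J-R)t}` decays exponentially in the Euclidean norm: there are `c ≥ 1`, `μ > 0` with
`‖e^{(J-R)t} x₀‖ ≤ c e^{-μt} ‖x₀‖` for all `x₀` and `t ≥ 0`. -/
theorem stmt_18 (n : ℕ) (J R : Matrix (Fin n) (Fin n) ℂ)
    (hJ : Jᴴ = -J) (hR : R.PosSemidef)
    (hrank : (Matrix.of fun (i : Fin n) (p : Fin n × Fin n) =>
      (J ^ (p.1 : ℕ) * R) i p.2).rank = n) :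
    ∃ (c : ℝ) (μ : ℝ), 1 ≤ c ∧ 0 < μ ∧
      ∀ (x₀ : Fin n → ℂ) (t : ℝ), 0 ≤ t →
        ‖(WithLp.equiv 2 (Fin n → ℂ)).symm ((NormedSpace.exp (t • (J - R))) *ᵥ x₀)‖ ≤
          c * Real.exp (-μ * t) * ‖(WithLp.equiv 2 (Fin n → ℂ)).symm x₀‖ := by
  obtain ⟨C, μ, hμ, hC⟩ :=
    exists_norm_exp_smul_mulVec_le fun z hz => re_lt_zero_of_mem_spectrum_sub hJ hR hrank hz
  refine ⟨max C 1, μ, le_max_right C 1, hμ, fun x₀ t ht => (hC x₀ t ht).trans ?_⟩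
  gcongr
  exact le_max_left C 1
end
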